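/- Let 0 < p < 1/2 and q = 1 − p. Let R_k(z) be the polynomials defined by R_{−1}(z) = 1, R_0(z) = 1 − q z, and R_k(z) = R_{k−1}(z) − p q z² R_{k−2}(z) for k ≥ 1. Then for every real z with 0 < z < 1/(2√(pq)), setting t = √(1 − 4 p q z²), u = ((1+t)/2)(1 + t − √(q/p)·√(1 − t²)) and v = ((1−t)/2)(−1 + t + √(q/p)·√(1 − t²)), one has for all k ≥ −1: R_k(z) = (1/(2t)) [ u ((1+t)/2)^k + v ((1−t)/2)^k ]. -/

import Mathlib

/-
With `t = √(1 - 4pqz²)`, the numbers `(1 ± t)/2` are the two roots of the characteristic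
equation `x² = x - pqz²` of the recurrence, so `R_k` is a combination of their powers whose
coefficients are fixed by `R_{-1}` and `R_0`. Since `1 - t² = 4pqz²`, the radical
`√(q/p)·√(1 - t²)` is just `2qz`, and the stated `u`, `v` are those coefficients.
-/

/-- Index-shifted denominator polynomials for the weak scenario: `Rwrec p z (k+1)`
is the quantity `R_k(z)` of the paper, so `R_{-1}(z) = 1`, `R_0(z) = 1 - (1-p) z`,
and `R_k(z) = R_{k-1}(z) - p (1-p) z² R_{k-2}(z)` for `k ≥ 1`. -/
noncomputable def Rwrec (p z : ℝ) : ℕ → ℝ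
  | 0 => 1
  | 1 => 1 - (1 - p) * z
  | (k + 2) => Rwrec p z (k + 1) - p * (1 - p) * z ^ 2 * Rwrec p z k

theorem Rwrec_eq_add_pow {p z a b A B : ℝ}
    (ha : a ^ 2 = a - p * (1 - p) * z ^ 2) (hb : b ^ 2 = b - p * (1 - p) * z ^ 2)
    (h0 : A + B = 1) (h1 : A * a + B * b = 1 - (1 - p) * z) (n : ℕ) :
    Rwrec p z n = A * a ^ n + B * b ^ n := by
  induction n using Nat.twoStepInduction with
  | zero => simpa [Rwrec] using h0.symm
  | one => simpa [Rwrec] using h1.symm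
  | more n ih₀ ih₁ =>
    rw [Rwrec, ih₀, ih₁]
    linear_combination (-A * a ^ n) * ha + (-B * b ^ n) * hb

theorem sqrt_div_mul_sqrt_four_mul_mul_sq {p q z : ℝ} (hp : 0 < p) (hq : 0 ≤ q) (hz : 0 ≤ z) :
    √(q / p) * √(4 * p * q * z ^ 2) = 2 * q * z := by
  have h : q / p * (4 * p * q * z ^ 2) = (2 * q * z) ^ 2 := by
    field_simp
    ring
  rw [← Real.sqrt_mul (div_nonneg hq hp.le), h, Real.sqrt_sq (by positivity)]

theorem mul_mul_zpow_natCast_sub_one {a : ℝ} (ha : a ≠ 0) (c : ℝ) (n : ℕ) :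
    a * c * a ^ ((n : ℤ) - 1) = c * a ^ n := by
  rw [zpow_sub_one₀ ha, zpow_natCast]
  field_simp

-- With `1 / 0 = 0`, the bound on `z > 0` can only hold when `√(pq) > 0`.
theorem pos_of_lt_one_div_two_mul_sqrt_mul {p q z : ℝ} (hp : 0 < p) (hz : 0 < z)
    (hzpq : z < 1 / (2 * √(p * q))) : 0 < q := by
  have hsqrt : 0 < √(p * q) := by
    by_contra! h
    rw [le_antisymm h (Real.sqrt_nonneg _), mul_zero, div_zero] at hzpq
    linarith
  exact pos_of_mul_pos_right (Real.sqrt_pos.mp hsqrt) hp.le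

theorem four_mul_mul_sq_lt_one {p q z : ℝ} (hp : 0 < p) (hz : 0 < z)
    (hzpq : z < 1 / (2 * √(p * q))) : 4 * p * q * z ^ 2 < 1 := by
  have hpq : 0 < p * q := mul_pos hp (pos_of_lt_one_div_two_mul_sqrt_mul hp hz hzpq)
  have h : z * (2 * √(p * q)) < 1 := (lt_div_iff₀ (by positivity)).mp hzpq
  have h2 : (z * (2 * √(p * q))) ^ 2 < 1 := by nlinarith [mul_pos hz (Real.sqrt_pos.mpr hpq)]
  nlinarith [Real.sq_sqrt hpq.le]

theorem weak_R_closed_form_general (p q : ℝ) (hp0 : 0 < p) (hq : q = 1 - p)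
    (z : ℝ) (hz0 : 0 < z) (hz1 : z < 1 / (2 * Real.sqrt (p * q)))
    (t u v : ℝ) (ht : t = Real.sqrt (1 - 4 * p * q * z ^ 2))
    (hu : u = (1 + t) / 2 * (1 + t - Real.sqrt (q / p) * Real.sqrt (1 - t ^ 2)))
    (hv : v = (1 - t) / 2 * (-1 + t + Real.sqrt (q / p) * Real.sqrt (1 - t ^ 2))) :
    ∀ k : ℤ, -1 ≤ k →
      Rwrec p z (k + 1).toNat =
        1 / (2 * t) * (u * ((1 + t) / 2) ^ k + v * ((1 - t) / 2) ^ k) := by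
  have hq0 : 0 < q := pos_of_lt_one_div_two_mul_sqrt_mul hp0 hz0 hz1
  have hdisc : 4 * p * q * z ^ 2 < 1 := four_mul_mul_sq_lt_one hp0 hz0 hz1
  have ht2 : t ^ 2 = 1 - 4 * p * q * z ^ 2 := by rw [ht, Real.sq_sqrt (by linarith)]
  have ht0 : 0 < t := by rw [ht]; exact Real.sqrt_pos.mpr (by linarith)
  have ht1 : t < 1 := by nlinarith [mul_pos (mul_pos hp0 hq0) (pow_pos hz0 2)]
  have hroot : √(q / p) * √(1 - t ^ 2) = 2 * q * z := by
    rw [show 1 - t ^ 2 = 4 * p * q * z ^ 2 by linarith]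
    exact sqrt_div_mul_sqrt_four_mul_mul_sq hp0 hq0.le hz0.le
  subst hq
  have hR := Rwrec_eq_add_pow (p := p) (z := z) (a := (1 + t) / 2) (b := (1 - t) / 2)
    (A := (1 + t - 2 * (1 - p) * z) / (2 * t)) (B := (-1 + t + 2 * (1 - p) * z) / (2 * t))
    (by linear_combination ht2 / 4) (by linear_combination ht2 / 4)
    (by field_simp; ring) (by field_simp; ring)
  intro k hk
  obtain ⟨n, rfl⟩ : ∃ n : ℕ, k = n - 1 := ⟨(k + 1).toNat, by omega⟩
  rw [show (n - 1 + 1 : ℤ).toNat = n by omega, hR, hu, hv, hroot,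
    mul_mul_zpow_natCast_sub_one (by positivity), mul_mul_zpow_natCast_sub_one (by linarith)]
  ring

/-- Explicit solution of the weak-scenario recurrence: with `t = √(1 - 4 p q z²)`,
`u = ((1+t)/2)(1 + t - √(q/p)√(1-t²))`, `v = ((1-t)/2)(-1 + t + √(q/p)√(1-t²))`,
`R_k(z) = (1/(2t)) [u ((1+t)/2)^k + v ((1-t)/2)^k]` for all `k ≥ -1`. -/
theorem weak_R_closed_form (p q : ℝ) (hp0 : 0 < p) (hp : p < 1 / 2) (hq : q = 1 - p)
    (z : ℝ) (hz0 : 0 < z) (hz1 : z < 1 / (2 * Real.sqrt (p * q)))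
    (t u v : ℝ) (ht : t = Real.sqrt (1 - 4 * p * q * z ^ 2))
    (hu : u = (1 + t) / 2 * (1 + t - Real.sqrt (q / p) * Real.sqrt (1 - t ^ 2)))
    (hv : v = (1 - t) / 2 * (-1 + t + Real.sqrt (q / p) * Real.sqrt (1 - t ^ 2))) :
    ∀ k : ℤ, -1 ≤ k →
      Rwrec p z (k + 1).toNat =
        1 / (2 * t) * (u * ((1 + t) / 2) ^ k + v * ((1 - t) / 2) ^ k) :=
  weak_R_closed_form_general p q hp0 hq z hz0 hz1 t u v ht hu hv
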